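/- arXiv:1012.4850 — 7 statements merged into one kernel-verified Lean document; each statement's English description precedes it below -/
import Mathlib

section
/- For all 1 < p < ∞ with p ≠ 2, one has cot(π/(2 p*)) < p* - 1, where p* = max(p, p/(p-1)). -/
/-!
Put `x = π / (2 p*)` and `u = π / 4 - x`; since `p* > 2`, both lie in `(0, π / 4)`.
The addition formula gives `cot x = tan (π / 4 + u) = 2 / (1 - tan u) - 1`, and convexity of
`tan` on `[0, π / 2)` keeps `tan u` strictly below its chord `4 u / π = 1 - 2 / p*` through
`(0, 0)` and `(π / 4, 1)`. Hence `cot x < 2 / (2 / p*) - 1 = p* - 1`.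
-/

open Real

namespace Real

open Set in
theorem strictConvexOn_tan : StrictConvexOn ℝ (Ico 0 (π / 2)) tan := by
  have hcos : ∀ x ∈ Ico 0 (π / 2), 0 < cos x := fun x hx =>
    cos_pos_of_mem_Ioo ⟨by linarith [hx.1, pi_pos], hx.2⟩
  refine StrictMonoOn.strictConvexOn_of_deriv (convex_Ico _ _)
    (continuousOn_tan.mono fun x hx => (hcos x hx).ne') ?_
  rw [interior_Ico]
  intro x hx y hy hxy
  simp only [deriv_tan]
  have := hcos y (Ioo_subset_Ico_self hy)
  have := cos_lt_cos_of_nonneg_of_le_pi_div_two hx.1.le hy.2.le hxy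
  gcongr

theorem tan_lt_four_div_pi_mul {u : ℝ} (h0 : 0 < u) (h1 : u < π / 4) : tan u < 4 / π * u := by
  have hpi := pi_pos
  have hθ : 0 < 4 / π * u := by positivity
  have hθ1 : 4 / π * u < 1 := by rw [div_mul_eq_mul_div, div_lt_one hpi]; linarith
  have hchord := strictConvexOn_tan.2 (x := 0) (y := π / 4) ⟨le_rfl, by linarith⟩
    ⟨by linarith, by linarith⟩ (by linarith) (sub_pos.2 hθ1) hθ (by ring)
  simp only [smul_eq_mul, mul_zero, zero_add, tan_zero, tan_pi_div_four, mul_one] at hchord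
  rwa [show 4 / π * u * (π / 4) = u by field_simp] at hchord

theorem cot_pi_div_four_sub {u : ℝ} (hcos : cos u ≠ 0) (htan : tan u ≠ 1) :
    cot (π / 4 - u) = 2 / (1 - tan u) - 1 := by
  rw [tan_eq_sin_div_cos, ne_eq, div_eq_one_iff_eq hcos] at htan
  have : cos u - sin u ≠ 0 := sub_ne_zero.2 (Ne.symm htan)
  rw [cot_eq_cos_div_sin, cos_sub, sin_sub, cos_pi_div_four, sin_pi_div_four, tan_eq_sin_div_cos]
  field_simp
  ring

end Real

theorem two_lt_max_self_div_sub_one {p : ℝ} (hp1 : 1 < p) (hp2 : p ≠ 2) :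
    2 < max p (p / (p - 1)) := by
  rcases hp2.lt_or_gt with h | h
  · exact lt_max_of_lt_right ((lt_div_iff₀ (by linarith)).2 (by linarith))
  · exact lt_max_of_lt_left h

theorem cot_lt_pstar_sub_one (p : ℝ) (hp1 : 1 < p) (hp2 : p ≠ 2) :
    Real.cot (π / (2 * max p (p / (p - 1)))) < max p (p / (p - 1)) - 1 := by
  set q := max p (p / (p - 1))
  have hq : 2 < q := two_lt_max_self_div_sub_one hp1 hp2
  have hpi := pi_pos
  set u := π / 4 - π / (2 * q)
  have hu0 : 0 < u := sub_pos.2 (div_lt_div_of_pos_left hpi (by norm_num) (by linarith))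
  have hu1 : u < π / 4 := sub_lt_self _ (by positivity)
  have htan : tan u < 1 - 2 / q := by
    convert tan_lt_four_div_pi_mul hu0 hu1 using 1
    simp only [u]
    field_simp
    ring
  have h2q : 0 < 2 / q := by positivity
  have hcos : cos u ≠ 0 := (cos_pos_of_mem_Ioo ⟨by linarith, by linarith⟩).ne'
  calc cot (π / (2 * q)) = 2 / (1 - tan u) - 1 := by
        rw [← cot_pi_div_four_sub hcos (by linarith)]
        simp only [u, sub_sub_cancel]
    _ < 2 / (2 / q) - 1 := by gcongr; linarith
    _ = q - 1 := by field_simp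
end

section
/- Let H be a real inner product space, 1 < p < ∞, p* = max(p, p/(p-1)), α_p = p(1 - 1/p*)^{p-1}, V(x,y) = ‖y‖^p - (p*-1)^p ‖x‖^p, and U(x,y) = α_p (‖y‖ - (p*-1)‖x‖)(‖x‖ + ‖y‖)^{p-1}. Then V(x,y) ≤ U(x,y) for all x, y ∈ H. -/
/-!
By homogeneity it suffices to take `‖x‖ + ‖y‖ = 1`, i.e. to show that the one-variable function
`f(t) = (V - U)(t, 1 - t)` is nonpositive on `[0, 1]`. At `t₀ = 1/p*` we have `f(t₀) = f'(t₀) = 0`,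
and `f''(t)` is a positive multiple of `(1 - t)^(p-2) - (p* - 1)^p t^(p-2)`, which changes sign
exactly once. The piece of `[0, 1]` on which `f` is concave contains `t₀`, so there `f` lies below
its horizontal tangent at `t₀`. On the other piece `f` is convex, hence bounded by its values at the
endpoints, and these are nonpositive because `1 ≤ α_p ≤ (p* - 1)^(p-1)` (Bernoulli's inequality
for `p ≥ 2`, weighted AM-GM for `p ≤ 2`).
-/

open Real Set

theorem ConcaveOn.le_of_hasDerivAt_eq_zero {S : Set ℝ} {f : ℝ → ℝ} {x y : ℝ}
    (hf : ConcaveOn ℝ S f) (hx : x ∈ S) (hy : y ∈ S) (hd : HasDerivAt f 0 x) : f y ≤ f x := by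
  rcases lt_trichotomy y x with hyx | rfl | hxy
  · have := hf.le_slope_of_hasDerivAt hy hx hyx hd
    rw [slope_def_field, le_div_iff₀ (sub_pos.2 hyx)] at this
    linarith
  · exact le_rfl
  · have := hf.slope_le_of_hasDerivAt hx hy hxy hd
    rw [slope_def_field, div_le_iff₀ (sub_pos.2 hxy)] at this
    linarith

theorem rpow_mul_rpow_eq_rpow_div_mul_rpow {k s a e : ℝ} (he : e ≠ 0) (hk : 0 ≤ k) (hs : 0 ≤ s) :
    k ^ a * s ^ e = (k ^ (a / e) * s) ^ e := by
  rw [mul_rpow (rpow_nonneg hk _) hs, ← rpow_mul hk, div_mul_cancel₀ _ he]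

noncomputable def pStar (p : ℝ) : ℝ := max p (p / (p - 1))

noncomputable def burkholderConst (p m : ℝ) : ℝ := p * (1 - 1 / m) ^ (p - 1)

/-- `V(x, y) - U(x, y)` at `‖x‖ = t`, `‖y‖ = 1 - t`, with `m` in place of `p*`. -/
noncomputable def burkholderGap (p m t : ℝ) : ℝ :=
  (1 - t) ^ p - (m - 1) ^ p * t ^ p - burkholderConst p m * (1 - m * t)

noncomputable def burkholderGapDeriv (p m t : ℝ) : ℝ :=
  -(p * (1 - t) ^ (p - 1)) - (m - 1) ^ p * (p * t ^ (p - 1)) + burkholderConst p m * m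

variable {p m : ℝ}

theorem burkholderGapDeriv.hasDerivAt {t : ℝ} (ht : t ∈ Ioo 0 1) :
    HasDerivAt (burkholderGapDeriv p m)
      (p * (p - 1) * ((1 - t) ^ (p - 2) - (m - 1) ^ p * t ^ (p - 2))) t := by
  have h1 := ((hasDerivAt_id t).const_sub 1).rpow_const (p := p - 1)
    (Or.inl (sub_ne_zero.2 ht.2.ne'))
  have h2 := (hasDerivAt_id t).rpow_const (p := p - 1) (Or.inl ht.1.ne')
  refine (((h1.const_mul p).neg.sub ((h2.const_mul p).const_mul ((m - 1) ^ p))).add_const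
    (burkholderConst p m * m)).congr_deriv ?_
  rw [show p - 1 - 1 = p - 2 by ring]
  simp only [id]; ring

namespace burkholderGap

theorem hasDerivAt (hp : 1 ≤ p) (t : ℝ) :
    HasDerivAt (burkholderGap p m) (burkholderGapDeriv p m t) t := by
  have h1 := ((hasDerivAt_id t).const_sub 1).rpow_const (p := p) (Or.inr hp)
  have h2 := (hasDerivAt_id t).rpow_const (p := p) (Or.inr hp)
  have h3 := ((hasDerivAt_id t).const_mul m).const_sub 1
  refine ((h1.sub (h2.const_mul ((m - 1) ^ p))).sub
    (h3.const_mul (burkholderConst p m))).congr_deriv ?_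
  simp only [id, burkholderGapDeriv]; ring

theorem continuous (hp : 1 ≤ p) : Continuous (burkholderGap p m) :=
  continuous_iff_continuousAt.2 fun t => (hasDerivAt hp t).continuousAt

theorem concaveOn (hp : 1 ≤ p) {a b : ℝ} (ha : 0 ≤ a) (hb : b ≤ 1)
    (h : ∀ t ∈ Ioo a b, (1 - t) ^ (p - 2) ≤ (m - 1) ^ p * t ^ (p - 2)) :
    ConcaveOn ℝ (Icc a b) (burkholderGap p m) := by
  refine concaveOn_of_hasDerivWithinAt2_nonpos (convex_Icc a b) (continuous hp).continuousOn
    (fun t _ => (hasDerivAt hp t).hasDerivWithinAt)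
    (fun t ht => (burkholderGapDeriv.hasDerivAt ?_).hasDerivWithinAt) fun t ht => ?_ <;>
    rw [interior_Icc] at ht
  · exact ⟨ha.trans_lt ht.1, ht.2.trans_le hb⟩
  · exact mul_nonpos_of_nonneg_of_nonpos (by nlinarith) (sub_nonpos.2 (h t ht))

theorem convexOn (hp : 1 ≤ p) {a b : ℝ} (ha : 0 ≤ a) (hb : b ≤ 1)
    (h : ∀ t ∈ Ioo a b, (m - 1) ^ p * t ^ (p - 2) ≤ (1 - t) ^ (p - 2)) :
    ConvexOn ℝ (Icc a b) (burkholderGap p m) := by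
  refine convexOn_of_hasDerivWithinAt2_nonneg (convex_Icc a b) (continuous hp).continuousOn
    (fun t _ => (hasDerivAt hp t).hasDerivWithinAt)
    (fun t ht => (burkholderGapDeriv.hasDerivAt ?_).hasDerivWithinAt) fun t ht => ?_ <;>
    rw [interior_Icc] at ht
  · exact ⟨ha.trans_lt ht.1, ht.2.trans_le hb⟩
  · exact mul_nonneg (by nlinarith) (sub_nonneg.2 (h t ht))

theorem apply_inv (hm : 1 < m) : burkholderGap p m m⁻¹ = 0 := by
  have hm0 : 0 < m := by linarith
  have h1 : 1 - m⁻¹ = (m - 1) * m⁻¹ := by field_simp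
  rw [burkholderGap, h1, mul_rpow (by linarith) (by positivity), mul_inv_cancel₀ hm0.ne']
  ring

theorem hasDerivAt_inv (hp : 1 ≤ p) (hm : 1 < m) : HasDerivAt (burkholderGap p m) 0 m⁻¹ := by
  refine (hasDerivAt hp m⁻¹).congr_deriv ?_
  have hm0 : 0 < m := by linarith
  have h1 : 1 - m⁻¹ = (m - 1) * m⁻¹ := by field_simp
  have h2 : (m - 1) ^ p = (m - 1) ^ (p - 1) * (m - 1) := by
    rw [← rpow_add_one (by linarith)]; ring_nf
  rw [burkholderGapDeriv, burkholderConst, one_div, h1, mul_rpow (by linarith) (by positivity), h2]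
  field_simp
  ring

theorem apply_zero (hp : p ≠ 0) : burkholderGap p m 0 = 1 - burkholderConst p m := by
  simp [burkholderGap, zero_rpow hp]

theorem apply_one (hp : p ≠ 0) :
    burkholderGap p m 1 = burkholderConst p m * (m - 1) - (m - 1) ^ p := by
  simp [burkholderGap, zero_rpow hp]; ring

theorem nonpos_of_lt_two (hp : 1 < p) (hp2 : p < 2) (hm : 2 ≤ m)
    (h1 : burkholderGap p m 1 ≤ 0) {t : ℝ} (ht : t ∈ Icc 0 1) : burkholderGap p m t ≤ 0 := by
  set w := (m - 1) ^ (p / (p - 2))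
  have hw : 0 < w := rpow_pos_of_pos (by linarith) _
  have hwm : w ≤ m - 1 := by
    have : p / (p - 2) ≤ 1 := (div_nonpos_of_nonneg_of_nonpos (by linarith) (by linarith)).trans
      zero_le_one
    simpa using rpow_le_rpow_of_exponent_le (by linarith : 1 ≤ m - 1) this
  -- `(m - 1)^p s^(p-2) = (w s)^(p-2)`: the second derivative changes sign where `w s = 1 - s`
  have hpow (s : ℝ) (hs : 0 ≤ s) : (m - 1) ^ p * s ^ (p - 2) = (w * s) ^ (p - 2) :=
    rpow_mul_rpow_eq_rpow_div_mul_rpow (sub_ne_zero.2 hp2.ne) (by linarith) hs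
  set u := (1 + w)⁻¹
  have hu : u * (1 + w) = 1 := inv_mul_cancel₀ (by linarith)
  have hu0 : 0 < u := by positivity
  have hu1 : u < 1 := inv_lt_one_of_one_lt₀ (by linarith)
  have hconc : ConcaveOn ℝ (Icc 0 u) (burkholderGap p m) := concaveOn hp.le le_rfl hu1.le
    fun s hs => by
      rw [hpow s hs.1.le]
      exact rpow_le_rpow_of_nonpos (by nlinarith [hs.1]) (by nlinarith [hs.2]) (by linarith)
  have hconv : ConvexOn ℝ (Icc u 1) (burkholderGap p m) := convexOn hp.le hu0.le le_rfl
    fun s hs => by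
      rw [hpow s (hu0.trans hs.1).le]
      exact rpow_le_rpow_of_nonpos (by linarith [hs.2]) (by nlinarith [hs.1]) (by linarith)
  have hleft : ∀ s ∈ Icc 0 u, burkholderGap p m s ≤ 0 := fun s hs =>
    (hconc.le_of_hasDerivAt_eq_zero ⟨by positivity, inv_anti₀ (by linarith) (by linarith)⟩ hs
      (hasDerivAt_inv hp.le (by linarith))).trans_eq (apply_inv (by linarith))
  rcases le_total t u with htu | hut
  · exact hleft t ⟨ht.1, htu⟩
  · exact (hconv.le_max_of_mem_Icc (left_mem_Icc.2 hu1.le) (right_mem_Icc.2 hu1.le)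
      ⟨hut, ht.2⟩).trans (max_le (hleft u ⟨hu0.le, le_rfl⟩) h1)

theorem nonpos_of_two_lt (hp2 : 2 < p) (hm : 2 ≤ m)
    (h0 : burkholderGap p m 0 ≤ 0) {t : ℝ} (ht : t ∈ Icc 0 1) : burkholderGap p m t ≤ 0 := by
  have hp : 1 ≤ p := by linarith
  set w := (m - 1) ^ (p / (p - 2))
  have hw : 0 < w := rpow_pos_of_pos (by linarith) _
  have hwm : m - 1 ≤ w := by
    have : 1 ≤ p / (p - 2) := by rw [le_div_iff₀ (by linarith)]; linarith
    simpa using rpow_le_rpow_of_exponent_le (by linarith : 1 ≤ m - 1) this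
  have hpow (s : ℝ) (hs : 0 ≤ s) : (m - 1) ^ p * s ^ (p - 2) = (w * s) ^ (p - 2) :=
    rpow_mul_rpow_eq_rpow_div_mul_rpow (sub_ne_zero.2 hp2.ne') (by linarith) hs
  set u := (1 + w)⁻¹
  have hu : u * (1 + w) = 1 := inv_mul_cancel₀ (by linarith)
  have hu0 : 0 < u := by positivity
  have hu1 : u < 1 := inv_lt_one_of_one_lt₀ (by linarith)
  have hconv : ConvexOn ℝ (Icc 0 u) (burkholderGap p m) := convexOn hp le_rfl hu1.le
    fun s hs => by
      rw [hpow s hs.1.le]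
      exact rpow_le_rpow (by nlinarith [hs.1]) (by nlinarith [hs.2]) (by linarith)
  have hconc : ConcaveOn ℝ (Icc u 1) (burkholderGap p m) := concaveOn hp hu0.le le_rfl
    fun s hs => by
      rw [hpow s (hu0.trans hs.1).le]
      exact rpow_le_rpow (by linarith [hs.2]) (by nlinarith [hs.1]) (by linarith)
  have hright : ∀ s ∈ Icc u 1, burkholderGap p m s ≤ 0 := fun s hs =>
    (hconc.le_of_hasDerivAt_eq_zero ⟨inv_anti₀ (by linarith) (by linarith),
      inv_le_one_of_one_le₀ (by linarith)⟩ hs (hasDerivAt_inv hp (by linarith))).trans_eq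
      (apply_inv (by linarith))
  rcases le_total t u with htu | hut
  · exact (hconv.le_max_of_mem_Icc (left_mem_Icc.2 hu0.le) (right_mem_Icc.2 hu0.le)
      ⟨ht.1, htu⟩).trans (max_le h0 (hright u ⟨le_rfl, hu1.le⟩))
  · exact hright t ⟨hut, ht.2⟩

theorem nonpos (hp : 1 < p) (hm : 2 ≤ m) (h0 : burkholderGap p m 0 ≤ 0)
    (h1 : burkholderGap p m 1 ≤ 0) {t : ℝ} (ht : t ∈ Icc 0 1) : burkholderGap p m t ≤ 0 := by
  rcases lt_trichotomy p 2 with hp2 | rfl | hp2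
  · exact nonpos_of_lt_two hp hp2 hm h1 ht
  · have hconc : ConcaveOn ℝ (Icc 0 1) (burkholderGap 2 m) := concaveOn one_le_two le_rfl le_rfl
      fun s _ => by simp only [sub_self, rpow_zero, mul_one, rpow_two]; nlinarith
    exact (hconc.le_of_hasDerivAt_eq_zero ⟨by positivity, inv_le_one_of_one_le₀ (by linarith)⟩ ht
      (hasDerivAt_inv one_le_two (by linarith))).trans_eq (apply_inv (by linarith))
  · exact nonpos_of_two_lt hp2 hm h0 ht

end burkholderGap

theorem pStar_of_two_le (hp : 2 ≤ p) : pStar p = p :=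
  max_eq_left <| by rw [div_le_iff₀ (by linarith)]; nlinarith

theorem pStar_of_le_two (hp : 1 < p) (hp2 : p ≤ 2) : pStar p = p / (p - 1) :=
  max_eq_right <| by rw [le_div_iff₀ (by linarith)]; nlinarith

theorem two_le_pStar (hp : 1 < p) : 2 ≤ pStar p := by
  rcases le_total 2 p with hp2 | hp2
  · rwa [pStar_of_two_le hp2]
  · rw [pStar_of_le_two hp hp2, le_div_iff₀ (by linarith)]; linarith

theorem burkholderConst_conj (hp : 1 < p) : burkholderConst p (p / (p - 1)) = p ^ (2 - p) := by
  have hp0 : 0 < p := by linarith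
  have h : 1 - 1 / (p / (p - 1)) = p⁻¹ := by field_simp; ring
  rw [burkholderConst, h, inv_rpow hp0.le, show 2 - p = 1 - (p - 1) by ring,
    rpow_sub hp0 1 (p - 1), rpow_one, div_eq_mul_inv]

theorem one_le_burkholderConst_pStar (hp : 1 < p) : 1 ≤ burkholderConst p (pStar p) := by
  rcases le_total 2 p with hp2 | hp2
  · have hbern := one_add_mul_self_le_rpow_one_add (s := -p⁻¹) (p := p - 1)
      (neg_le_neg (inv_le_one_of_one_le₀ hp.le)) (by linarith)
    have h : 1 + (p - 1) * -p⁻¹ = p⁻¹ := by field_simp; ring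
    rw [h, ← sub_eq_add_neg] at hbern
    rw [pStar_of_two_le hp2, burkholderConst, one_div]
    calc (1 : ℝ) = p * p⁻¹ := (mul_inv_cancel₀ (by linarith)).symm
      _ ≤ _ := mul_le_mul_of_nonneg_left hbern (by linarith)
  · rw [pStar_of_le_two hp hp2, burkholderConst_conj hp]
    exact one_le_rpow hp.le (by linarith)

theorem burkholderConst_pStar_mul_le (hp : 1 < p) :
    burkholderConst p (pStar p) * (pStar p - 1) ≤ (pStar p - 1) ^ p := by
  have hp1 : 0 < p - 1 := by linarith
  have hpow : (p - 1) ^ p = (p - 1) ^ (p - 1) * (p - 1) := by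
    rw [← rpow_add_one hp1.ne']; ring_nf
  rcases le_total 2 p with hp2 | hp2
  · have hp0 : 0 < p := by linarith
    have h : 1 - 1 / p = (p - 1) / p := by field_simp
    have hself : p ≤ p ^ (p - 1) := by
      simpa using rpow_le_rpow_of_exponent_le hp.le (by linarith : (1 : ℝ) ≤ p - 1)
    rw [pStar_of_two_le hp2, burkholderConst, h, div_rpow hp1.le hp0.le, hpow, mul_div_assoc',
      div_mul_eq_mul_div, div_le_iff₀ (by positivity)]
    have := mul_le_mul_of_nonneg_left hself (by positivity : 0 ≤ (p - 1) ^ (p - 1) * (p - 1))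
    linarith
  · have hamgm := geom_mean_le_arith_mean2_weighted hp1.le (by linarith : 0 ≤ 2 - p) hp1.le
      (by linarith : 0 ≤ p) (by ring)
    have h : p / (p - 1) - 1 = (p - 1)⁻¹ := by field_simp; ring
    rw [pStar_of_le_two hp hp2, burkholderConst_conj hp, h, inv_rpow hp1.le, hpow,
      mul_inv]
    refine mul_le_mul_of_nonneg_right ?_ (inv_nonneg.2 hp1.le)
    rw [← one_div, le_div_iff₀ (by positivity)]
    linarith

theorem burkholderGap.nonpos_pStar (hp : 1 < p) {t : ℝ} (ht : t ∈ Icc 0 1) :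
    burkholderGap p (pStar p) t ≤ 0 := by
  have hp0 : p ≠ 0 := by linarith
  refine burkholderGap.nonpos hp (two_le_pStar hp) ?_ ?_ ht
  · rw [burkholderGap.apply_zero hp0]; linarith [one_le_burkholderConst_pStar hp]
  · rw [burkholderGap.apply_one hp0]; linarith [burkholderConst_pStar_mul_le hp]

theorem rpow_sub_le_of_burkholderGap_nonpos (hp : 0 < p)
    (hgap : ∀ t ∈ Icc 0 1, burkholderGap p m t ≤ 0) {a b : ℝ} (ha : 0 ≤ a) (hb : 0 ≤ b) :
    b ^ p - (m - 1) ^ p * a ^ p ≤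
      burkholderConst p m * ((b - (m - 1) * a) * (a + b) ^ (p - 1)) := by
  rcases (add_nonneg ha hb).eq_or_lt with hs | hs
  · obtain ⟨rfl, rfl⟩ : a = 0 ∧ b = 0 := ⟨by linarith, by linarith⟩
    simp [zero_rpow hp.ne']
  have ht : a / (a + b) ∈ Icc 0 1 := ⟨by positivity, div_le_one_of_le₀ (by linarith) hs.le⟩
  have h1 : 1 - a / (a + b) = b / (a + b) := by field_simp; ring
  have hsp : (a + b) ^ p = (a + b) ^ (p - 1) * (a + b) := by
    rw [← rpow_add_one hs.ne']; ring_nf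
  have key : (a + b) ^ p * burkholderGap p m (a / (a + b)) = b ^ p - (m - 1) ^ p * a ^ p -
      burkholderConst p m * ((b - (m - 1) * a) * (a + b) ^ (p - 1)) := by
    rw [burkholderGap, h1, div_rpow hb hs.le, div_rpow ha hs.le]
    field_simp
    rw [hsp]
    ring
  nlinarith [mul_nonpos_of_nonneg_of_nonpos (rpow_nonneg hs.le p) (hgap _ ht)]

theorem burkholder_V_le_U_general (H : Type*) [NormedAddCommGroup H]
    (p : ℝ) (hp : 1 < p) (x y : H) :
    ‖y‖ ^ p - (max p (p / (p - 1)) - 1) ^ p * ‖x‖ ^ p ≤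
      (p * (1 - 1 / max p (p / (p - 1))) ^ (p - 1)) *
        ((‖y‖ - (max p (p / (p - 1)) - 1) * ‖x‖) * (‖x‖ + ‖y‖) ^ (p - 1)) :=
  rpow_sub_le_of_burkholderGap_nonpos (by linarith)
    (fun _ ht => burkholderGap.nonpos_pStar hp ht) (norm_nonneg x) (norm_nonneg y)

/-- Burkholder's majorization `V ≤ U` on a real inner product space. -/
theorem burkholder_V_le_U (H : Type*) [NormedAddCommGroup H] [InnerProductSpace ℝ H]
    (p : ℝ) (hp : 1 < p) (x y : H) :
    ‖y‖ ^ p - (max p (p / (p - 1)) - 1) ^ p * ‖x‖ ^ p ≤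
      (p * (1 - 1 / max p (p / (p - 1))) ^ (p - 1)) *
        ((‖y‖ - (max p (p / (p - 1)) - 1) * ‖x‖) * (‖x‖ + ‖y‖) ^ (p - 1)) :=
  burkholder_V_le_U_general H p hp x y
end

section
/- The quantity |Γ(2 - 2iγ)| / |Γ(1 - iγ)| equals (2/√π) |Γ(3/2 - iγ)| for every real γ, and this quantity is ≤ 1 for all γ ∈ ℝ, with equality if and only if γ = 0. -/
open Real Complex

/-!
Taking norms in the Legendre duplication formula at `s = 1 - iγ` gives the identity. For the
bound, `Γ(3/2 - iγ) = (1/2 - iγ) Γ(1/2 - iγ)` and the reflection formula at `1/2 - iγ` (whose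
reflection `1/2 + iγ` is its conjugate) give `|Γ(3/2 - iγ)|² = π (1/4 + γ²) / cosh (πγ)`, so the
squared ratio is `(1 + 4γ²) / cosh (πγ)`; and `cosh (πγ) > 1 + π²γ²/2 > 1 + 4γ²` for `γ ≠ 0`.
-/

theorem Real.one_add_sq_div_two_lt_cosh {t : ℝ} (ht : t ≠ 0) : 1 + t ^ 2 / 2 < cosh t := by
  have hcosh : cosh t = 1 + 2 * sinh (t / 2) ^ 2 := by
    have h := cosh_two_mul (t / 2)
    rw [mul_div_cancel₀ t two_ne_zero] at h
    rw [h, cosh_sq]; ring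
  have hsinh : (t / 2) ^ 2 < sinh (t / 2) ^ 2 := by
    rw [sq_lt_sq, abs_sinh]
    exact self_lt_sinh_iff.mpr (abs_pos.mpr (div_ne_zero ht two_ne_zero))
  rw [hcosh]
  nlinarith

theorem Real.one_add_four_mul_sq_lt_cosh_pi_mul {x : ℝ} (hx : x ≠ 0) :
    1 + 4 * x ^ 2 < cosh (π * x) := by
  have hπ : 8 < π ^ 2 := by nlinarith [pi_gt_three]
  have hx2 : 0 < x ^ 2 := by positivity
  calc 1 + 4 * x ^ 2 < 1 + (π * x) ^ 2 / 2 := by nlinarith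
    _ < cosh (π * x) := one_add_sq_div_two_lt_cosh (mul_ne_zero pi_ne_zero hx)

namespace Complex

theorem norm_Gamma_two_mul_div_norm_Gamma {s : ℂ} (hs : Gamma s ≠ 0) :
    ‖Gamma (2 * s)‖ / ‖Gamma s‖ = 2 ^ (2 * s.re - 1) / √π * ‖Gamma (s + 1 / 2)‖ := by
  have hdup := congrArg (‖·‖) (Gamma_mul_Gamma_add_half s)
  simp only [norm_mul, norm_real, norm_of_nonneg (sqrt_nonneg π)] at hdup
  have hpow : ‖(2 : ℂ) ^ (1 - 2 * s)‖ = (2 ^ (2 * s.re - 1))⁻¹ := by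
    rw [← rpow_neg zero_le_two]
    simpa [neg_sub] using norm_cpow_eq_rpow_re_of_pos two_pos (1 - 2 * s)
  rw [hpow] at hdup
  have hc : (2 : ℝ) ^ (2 * s.re - 1) ≠ 0 := by positivity
  have hπ : √π ≠ 0 := (sqrt_pos.mpr pi_pos).ne'
  rw [div_eq_iff (norm_ne_zero_iff.mpr hs)]
  generalize ‖Gamma s‖ = a, ‖Gamma (s + 1 / 2)‖ = b, ‖Gamma (2 * s)‖ = c at hdup ⊢
  field_simp at hdup ⊢
  linear_combination -hdup

theorem norm_sq_Gamma_one_half_add_mul_I (y : ℝ) :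
    ‖Gamma (1 / 2 + y * I)‖ ^ 2 = π / Real.cosh (π * y) := by
  have hrefl := Gamma_mul_Gamma_one_sub (1 / 2 + y * I)
  have hconj : 1 - (1 / 2 + y * I) = starRingEnd ℂ (1 / 2 + y * I) := by
    apply Complex.ext <;> norm_num
  have hsin : sin (π * (1 / 2 + y * I)) = (Real.cosh (π * y) : ℂ) := by
    rw [show (π : ℂ) * (1 / 2 + y * I) = ((π * y : ℝ) : ℂ) * I + π / 2 by push_cast; ring,
      sin_add_pi_div_two, cos_mul_I, ofReal_cosh]
  rw [hconj, Gamma_conj, mul_conj, hsin] at hrefl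
  rw [Complex.sq_norm, ← ofReal_inj, hrefl]
  push_cast
  ring

theorem norm_sq_Gamma_three_halves_add_mul_I (y : ℝ) :
    ‖Gamma (3 / 2 + y * I)‖ ^ 2 = π * (1 / 4 + y ^ 2) / Real.cosh (π * y) := by
  have hz : (1 / 2 + y * I : ℂ) ≠ 0 := fun h => by simpa using congrArg re h
  have hnorm : ‖(1 / 2 + y * I : ℂ)‖ ^ 2 = 1 / 4 + y ^ 2 := by
    rw [Complex.sq_norm, normSq_apply]
    norm_num [sq]
  rw [show (3 / 2 + y * I : ℂ) = 1 / 2 + y * I + 1 by ring, Gamma_add_one _ hz, norm_mul, mul_pow,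
    hnorm, norm_sq_Gamma_one_half_add_mul_I]
  ring

end Complex

theorem gamma_ratio (γ : ℝ) :
    ‖Complex.Gamma (2 - 2 * γ * Complex.I)‖ /
        ‖Complex.Gamma (1 - γ * Complex.I)‖
      = (2 / Real.sqrt π) * ‖Complex.Gamma (3 / 2 - γ * Complex.I)‖ ∧
    ‖Complex.Gamma (2 - 2 * γ * Complex.I)‖ /
        ‖Complex.Gamma (1 - γ * Complex.I)‖ ≤ 1 ∧
    (‖Complex.Gamma (2 - 2 * γ * Complex.I)‖ /
        ‖Complex.Gamma (1 - γ * Complex.I)‖ = 1 ↔ γ = 0) := by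
  have hΓ : Gamma (1 - γ * I) ≠ 0 := Gamma_ne_zero_of_re_pos (by simp)
  have hratio := norm_Gamma_two_mul_div_norm_Gamma hΓ
  rw [show 2 * (1 - γ * I) = 2 - 2 * γ * I by ring,
    show 1 - γ * I + 1 / 2 = 3 / 2 - γ * I by ring,
    show (2 : ℝ) ^ (2 * (1 - γ * I).re - 1) = 2 by norm_num] at hratio
  set r := ‖Gamma (2 - 2 * γ * I)‖ / ‖Gamma (1 - γ * I)‖
  have hr : 0 ≤ r := by positivity
  have hcosh : 0 < Real.cosh (π * γ) := Real.cosh_pos _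
  have hsq : r ^ 2 = (1 + 4 * γ ^ 2) / Real.cosh (π * γ) := by
    have h := norm_sq_Gamma_three_halves_add_mul_I (-γ)
    rw [ofReal_neg, neg_mul, ← sub_eq_add_neg, mul_neg, Real.cosh_neg] at h
    rw [hratio, mul_pow, div_pow, sq_sqrt pi_pos.le, h]
    field_simp
    ring
  refine ⟨hratio, ?_, ?_⟩
  · rw [← sq_le_one_iff₀ hr, hsq, div_le_one hcosh]
    rcases eq_or_ne γ 0 with rfl | hγ
    · simp
    · exact (one_add_four_mul_sq_lt_cosh_pi_mul hγ).le
  · rw [← pow_eq_one_iff_of_nonneg hr two_ne_zero, hsq, div_eq_one_iff_eq hcosh.ne']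
    refine ⟨fun h => ?_, fun h => by simp [h]⟩
    by_contra hγ
    exact (one_add_four_mul_sq_lt_cosh_pi_mul hγ).ne h
end

section
/- Let 𝓑 be the 2×2 complex matrix with rows (1, -i) and (-i, -1). Then the operator norm of 𝓑 acting on ℂ² (with the standard Hermitian norm) equals 2, while the operator norm of 𝓑 restricted to real vectors, i.e. sup{‖𝓑x‖ : x ∈ ℝ², ‖x‖ ≤ 1}, equals √2. -/
open Real Complex

/-!
Writing `u = (1, i)`, every `v ∈ ℂ²` satisfies `𝓑 v = (w, -i w)` with `w = ⟪u, v⟫ = v₀ - i v₁`,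
so `‖𝓑 v‖ = √2 |⟪u, v⟫|`. By Cauchy–Schwarz this is at most `√2 ‖u‖ ‖v‖ = 2 ‖v‖`, with equality
at `v = u`. For a real vector `x`, `|x₀ - i x₁| = ‖x‖`, so `𝓑` is `√2` times an isometry on `ℝ²`.
-/

lemma ContinuousLinearMap.opNorm_eq_of_le_of_eq {𝕜 E F : Type*} [NontriviallyNormedField 𝕜]
    [NormedAddCommGroup E] [SeminormedAddCommGroup F] [NormedSpace 𝕜 E] [NormedSpace 𝕜 F]
    (f : E →L[𝕜] F) {M : ℝ} (hM : 0 ≤ M) (hle : ∀ x, ‖f x‖ ≤ M * ‖x‖) {x₀ : E} (hx₀ : x₀ ≠ 0)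
    (heq : ‖f x₀‖ = M * ‖x₀‖) : ‖f‖ = M :=
  le_antisymm (f.opNorm_le_bound hM hle) <|
    le_of_mul_le_mul_right (heq ▸ f.le_opNorm x₀) (norm_pos_iff.mpr hx₀)

lemma sSup_norm_closedBall_eq_of_norm_eq_mul {E F : Type*} [NormedAddCommGroup E]
    [NormedSpace ℝ E] [Nontrivial E] [SeminormedAddCommGroup F] (f : E → F) {c : ℝ} (hc : 0 ≤ c)
    (hf : ∀ x, ‖f x‖ = c * ‖x‖) :
    sSup {r : ℝ | ∃ x : E, ‖x‖ ≤ 1 ∧ r = ‖f x‖} = c := by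
  have hbound : ∀ r ∈ {r : ℝ | ∃ x : E, ‖x‖ ≤ 1 ∧ r = ‖f x‖}, r ≤ c := by
    rintro r ⟨x, hx, rfl⟩
    rw [hf]
    exact mul_le_of_le_one_right hc hx
  obtain ⟨x₁, hx₁⟩ := exists_norm_eq E zero_le_one
  refine le_antisymm (csSup_le ⟨_, x₁, hx₁.le, rfl⟩ hbound) (le_csSup ⟨c, hbound⟩ ?_)
  exact ⟨x₁, hx₁.le, by rw [hf, hx₁, mul_one]⟩

open Matrix

noncomputable def beurlingMatrix : Matrix (Fin 2) (Fin 2) ℂ := !![1, -I; -I, -1]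

noncomputable def beurlingVector : EuclideanSpace ℂ (Fin 2) := !₂[1, I]

lemma beurlingMatrix_mulVec (v : Fin 2 → ℂ) :
    beurlingMatrix *ᵥ v = ![v 0 - I * v 1, -I * (v 0 - I * v 1)] := by
  ext i
  fin_cases i <;>
    simp [beurlingMatrix, mulVec, dotProduct, Fin.sum_univ_two, mul_sub, ← mul_assoc] <;> ring

lemma norm_toLp_beurlingMatrix_mulVec (v : Fin 2 → ℂ) :
    ‖WithLp.toLp 2 (beurlingMatrix *ᵥ v)‖ = √2 * ‖v 0 - I * v 1‖ := by
  rw [beurlingMatrix_mulVec, EuclideanSpace.norm_eq, Fin.sum_univ_two]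
  simp only [cons_val_zero, cons_val_one, norm_mul, norm_neg, norm_I, one_mul]
  rw [← two_mul, sqrt_mul zero_le_two, sqrt_sq (norm_nonneg _)]

lemma inner_beurlingVector (v : EuclideanSpace ℂ (Fin 2)) :
    inner ℂ beurlingVector v = v 0 - I * v 1 := by
  simp [beurlingVector, PiLp.inner_apply, Fin.sum_univ_two, sub_eq_add_neg, mul_comm]

lemma norm_beurlingVector : ‖beurlingVector‖ = √2 := by
  rw [beurlingVector, EuclideanSpace.norm_eq, Fin.sum_univ_two]
  simp [one_add_one_eq_two]

lemma norm_ofReal_sub_I_mul_ofReal (x : EuclideanSpace ℝ (Fin 2)) :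
    ‖(x 0 : ℂ) - I * x 1‖ = ‖x‖ := by
  rw [EuclideanSpace.norm_eq, Fin.sum_univ_two, sub_eq_add_neg, ← neg_mul, mul_comm, mul_neg,
    ← neg_mul, ← ofReal_neg, norm_add_mul_I]
  simp

lemma norm_toEuclideanCLM_beurlingMatrix_apply (v : EuclideanSpace ℂ (Fin 2)) :
    ‖toEuclideanCLM (𝕜 := ℂ) beurlingMatrix v‖ = √2 * ‖inner ℂ beurlingVector v‖ := by
  rw [inner_beurlingVector]
  exact norm_toLp_beurlingMatrix_mulVec v

theorem opNorm_toEuclideanCLM_beurlingMatrix :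
    ‖toEuclideanCLM (𝕜 := ℂ) beurlingMatrix‖ = 2 := by
  have hsqrt : √2 * √2 = 2 := mul_self_sqrt zero_le_two
  have hu : beurlingVector ≠ 0 := by
    rw [← norm_ne_zero_iff, norm_beurlingVector]
    positivity
  refine ContinuousLinearMap.opNorm_eq_of_le_of_eq _ zero_le_two (fun v => ?_) hu ?_
  · calc _ = √2 * ‖inner ℂ beurlingVector v‖ := norm_toEuclideanCLM_beurlingMatrix_apply v
      _ ≤ √2 * (√2 * ‖v‖) := by
        gcongr
        exact norm_beurlingVector ▸ norm_inner_le_norm _ _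
      _ = 2 * ‖v‖ := by rw [← mul_assoc, hsqrt]
  · rw [norm_toEuclideanCLM_beurlingMatrix_apply, inner_self_eq_norm_sq_to_K, norm_pow,
      RCLike.norm_ofReal, abs_norm, norm_beurlingVector, sq, ← mul_assoc, hsqrt]

theorem beurling_matrix_norms :
    let B : Matrix (Fin 2) (Fin 2) ℂ := !![1, -Complex.I; -Complex.I, -1]
    ‖Matrix.toEuclideanCLM (𝕜 := ℂ) B‖ = 2 ∧
    sSup {r : ℝ | ∃ x : EuclideanSpace ℝ (Fin 2), ‖x‖ ≤ 1 ∧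
        r = ‖(WithLp.equiv 2 (Fin 2 → ℂ)).symm (B.mulVec (fun i => (x i : ℂ)))‖}
      = Real.sqrt 2 := by
  refine ⟨opNorm_toEuclideanCLM_beurlingMatrix,
    sSup_norm_closedBall_eq_of_norm_eq_mul _ (sqrt_nonneg 2) fun x => ?_⟩
  change ‖WithLp.toLp 2 (beurlingMatrix *ᵥ _)‖ = _
  rw [norm_toLp_beurlingMatrix_mulVec, norm_ofReal_sub_I_mul_ofReal]
end

section
/- Let 𝓑 = [[1, -i], [-i, -1]] and K = [[0, -1], [1, 0]] as 2×2 complex matrices. Then inf over α ∈ ℂ of the operator norm ‖𝓑 + αK‖ (on ℂ²) equals ‖𝓑‖ = 2. -/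
open Real Complex InnerProductSpace

/-!
With `u = (1, -i)` and `v = (1, i)`, the matrix `𝓑` is the rank-one operator `x ↦ ⟪v, x⟫ u`,
so `‖𝓑‖ = ‖u‖ ‖v‖ = 2`, the norm being attained at `v`. Since `K v = (-i, 1)` is orthogonal to
`u`, Pythagoras gives `‖(𝓑 + α K) v‖ ≥ ‖𝓑 v‖ = ‖𝓑‖ ‖v‖` for every `α`.
-/

theorem ciInf_eq_of_forall_ge {ι α : Type*} [ConditionallyCompleteLattice α] {f : ι → α}
    (i₀ : ι) (h : ∀ i, f i₀ ≤ f i) : ⨅ i, f i = f i₀ :=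
  IsLeast.csInf_eq ⟨Set.mem_range_self i₀, Set.forall_mem_range.2 h⟩

section

variable {𝕜 E F : Type*} [RCLike 𝕜] [NormedAddCommGroup E] [InnerProductSpace 𝕜 E]
  [NormedAddCommGroup F] [InnerProductSpace 𝕜 F]

theorem norm_le_norm_add_smul_of_inner_eq_zero {x y : E} (h : inner 𝕜 x y = 0) (c : 𝕜) :
    ‖x‖ ≤ ‖x + c • y‖ := by
  have hxy : inner 𝕜 x (c • y) = 0 := by rw [inner_smul_right, h, mul_zero]
  have := norm_add_sq_eq_norm_sq_add_norm_sq_of_inner_eq_zero x (c • y) hxy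
  nlinarith [norm_nonneg x, norm_nonneg (x + c • y), mul_self_nonneg ‖c • y‖]

theorem InnerProductSpace.norm_rankOne_le_norm_add_smul {x : E} {y : F} {T : F →L[𝕜] E}
    (h : inner 𝕜 x (T y) = 0) (c : 𝕜) : ‖rankOne 𝕜 x y‖ ≤ ‖rankOne 𝕜 x y + c • T‖ := by
  rcases eq_or_ne y 0 with rfl | hy
  · simp
  have horth : inner 𝕜 (rankOne 𝕜 x y y) (T y) = 0 := by
    rw [rankOne_apply, inner_smul_left, h, mul_zero]
  refine le_of_mul_le_mul_right ?_ (norm_pos_iff.2 hy)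
  calc ‖rankOne 𝕜 x y‖ * ‖y‖ = ‖rankOne 𝕜 x y y‖ := by
        rw [norm_rankOne, rankOne_apply, norm_smul, inner_self_eq_norm_sq_to_K, norm_pow,
          RCLike.norm_ofReal, abs_norm]
        ring
    _ ≤ ‖(rankOne 𝕜 x y + c • T) y‖ := norm_le_norm_add_smul_of_inner_eq_zero horth c
    _ ≤ ‖rankOne 𝕜 x y + c • T‖ * ‖y‖ := (rankOne 𝕜 x y + c • T).le_opNorm y

end

theorem Matrix.toEuclideanCLM_vecMulVec_star {𝕜 n : Type*} [RCLike 𝕜] [Fintype n]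
    [DecidableEq n] (x y : EuclideanSpace 𝕜 n) :
    toEuclideanCLM (𝕜 := 𝕜) (vecMulVec x (star y)) = rankOne 𝕜 x y := by
  rw [← symm_toEuclideanLin_rankOne]
  apply ContinuousLinearMap.coe_injective
  rw [coe_toEuclideanCLM_eq_toEuclideanLin, LinearEquiv.apply_symm_apply]

theorem beurling_matrix_minimal_norm :
    let B : Matrix (Fin 2) (Fin 2) ℂ := !![1, -Complex.I; -Complex.I, -1]
    let K : Matrix (Fin 2) (Fin 2) ℂ := !![0, -1; 1, 0]
    (⨅ α : ℂ, ‖Matrix.toEuclideanCLM (𝕜 := ℂ) (B + α • K)‖)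
        = ‖Matrix.toEuclideanCLM (𝕜 := ℂ) B‖ ∧
    ‖Matrix.toEuclideanCLM (𝕜 := ℂ) B‖ = 2 := by
  intro B K
  set u : EuclideanSpace ℂ (Fin 2) := !₂[1, -I]
  set v : EuclideanSpace ℂ (Fin 2) := !₂[1, I]
  have hB : Matrix.toEuclideanCLM (𝕜 := ℂ) B = rankOne ℂ u v := by
    rw [← Matrix.toEuclideanCLM_vecMulVec_star]
    congr 1
    ext i j
    fin_cases i <;> fin_cases j <;> simp [B, u, v, Matrix.vecMulVec_apply]
  have hnorm : ‖rankOne ℂ u v‖ = 2 := by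
    norm_num [u, v, EuclideanSpace.norm_eq]
  have horth : inner ℂ u (Matrix.toEuclideanCLM (𝕜 := ℂ) K v) = 0 := by
    simp [u, v, K, EuclideanSpace.inner_eq_star_dotProduct]
  have hB0 : B + (0 : ℂ) • K = B := by rw [zero_smul, add_zero]
  have hmin (α : ℂ) : ‖Matrix.toEuclideanCLM (𝕜 := ℂ) (B + (0 : ℂ) • K)‖ ≤
      ‖Matrix.toEuclideanCLM (𝕜 := ℂ) (B + α • K)‖ := by
    rw [hB0, map_add, map_smul, hB]
    exact norm_rankOne_le_norm_add_smul horth α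
  rw [ciInf_eq_of_forall_ge 0 hmin, hB0, hB, hnorm]
  exact ⟨rfl, rfl⟩
end

section
/- For 0 < α < 2 and ξ ∈ ℝ² \ {0}, writing c_α = ∫₀^∞ (1 - cos s)/s^{1+α} ds (a finite positive constant), one has ∫_{ℝ²} (1 - cos(ξ·z)) |z|^{-2-α} dz = c_α ∫₀^{2π} |ξ·(cos t, sin t)|^α dt, and with φ(cos t, sin t) = e^{-2it}, ∫₀^{2π} |ξ·(cos t, sin t)|^α e^{-2it} dt / ∫₀^{2π} |ξ·(cos t, sin t)|^α dt = (α/(α+2)) · conj(ξ)²/|ξ|², identifying ξ ∈ ℝ² with a complex number. -/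
/-!
In polar coordinates `z = r e^{iθ}` one has `Re (ξ z̄) = r u(θ)` with `u(θ) = Re (ξ e^{-iθ})`,
so by Fubini the integral becomes `∫ θ, ∫ r > 0, (1 - cos (u(θ) r)) / r ^ (1 + α)`, and the
substitution `s = |u(θ)| r` turns the inner integral into `c_α |u(θ)| ^ α`.

For the ratio, `G(t) = |u(t)| ^ α u(t) e^{-it}` is `2π`-periodic with
`G' = (i / 2) |u| ^ α (α ξ̄ - (α + 2) ξ e^{-2it})` (using `u' = Im (ξ e^{-it})`), so
`∫₀^{2π} G' = 0` gives `(α + 2) ξ N = α ξ̄ D` for the numerator `N` and denominator `D`.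
-/
open Real Complex MeasureTheory intervalIntegral Set Filter Topology

theorem setIntegral_pos_of_pos_on_isOpen {X : Type*} [TopologicalSpace X] [MeasurableSpace X]
    {μ : Measure X} [μ.IsOpenPosMeasure] {f : X → ℝ} {s U : Set X} (hs : MeasurableSet s)
    (hf : IntegrableOn f s μ) (hnn : ∀ x ∈ s, 0 ≤ f x) (hU : IsOpen U) (hUne : U.Nonempty)
    (hUs : U ⊆ s) (hpos : ∀ x ∈ U, 0 < f x) : 0 < ∫ x in s, f x ∂μ := by
  rw [setIntegral_pos_iff_support_of_nonneg_ae (ae_restrict_of_forall_mem hs hnn) hf]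
  exact (hU.measure_pos μ hUne).trans_le
    (measure_mono fun x hx => ⟨(hpos x hx).ne', hUs hx⟩)

theorem Function.Periodic.setIntegral_Ioo_neg_pi_pi {E : Type*} [NormedAddCommGroup E]
    [NormedSpace ℝ E] {f : ℝ → E} (hf : Function.Periodic f (2 * π)) :
    ∫ t in Ioo (-π) π, f t = ∫ t in 0..2 * π, f t := by
  have h := hf.intervalIntegral_add_eq (-π) 0
  rw [zero_add, show -π + 2 * π = π by ring] at h
  rw [← integral_Ioc_eq_integral_Ioo, ← integral_of_le (by linarith [pi_pos]), h]

theorem hasDerivAt_abs_rpow_mul_self {α : ℝ} (hα : 0 < α) (x : ℝ) :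
    HasDerivAt (fun y : ℝ => |y| ^ α * y) ((α + 1) * |x| ^ α) x := by
  rcases eq_or_ne x 0 with rfl | hx
  · rw [hasDerivAt_iff_isLittleO_nhds_zero]
    have hsmall : (fun y : ℝ => |y| ^ α) =o[𝓝 0] fun _ => (1 : ℝ) := by
      rw [Asymptotics.isLittleO_one_iff]
      simpa [zero_rpow hα.ne'] using
        ((continuous_abs.rpow_const fun _ => Or.inr hα.le).tendsto (0 : ℝ))
    simpa [zero_rpow hα.ne'] using hsmall.mul_isBigO (Asymptotics.isBigO_refl id (𝓝 0))
  · refine (((hasDerivAt_abs hx).rpow_const (Or.inl (abs_ne_zero.2 hx))).mul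
      (hasDerivAt_id x)).congr_deriv ?_
    rw [rpow_sub_one (abs_ne_zero.2 hx)]
    rcases hx.lt_or_gt with h | h
    · simp only [abs_of_neg h, sign_neg h, SignType.coe_neg_one, id]; field_simp
    · simp only [abs_of_pos h, sign_pos h, SignType.coe_one, id]; field_simp

theorem one_sub_cos_div_rpow_nonneg (x : ℝ) {s : ℝ} (hs : 0 ≤ s) (β : ℝ) :
    0 ≤ (1 - Real.cos x) / s ^ β :=
  div_nonneg (sub_nonneg.2 (Real.cos_le_one x)) (rpow_nonneg hs β)

theorem exp_neg_ofReal_mul_I_periodic :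
    Function.Periodic (fun t : ℝ => Complex.exp (-t * I)) (2 * π) := fun t => by
  simpa [neg_add, add_mul, add_comm] using Complex.exp_periodic.neg (-t * I)

theorem re_mul_exp_neg_ofReal_mul_I (ξ : ℂ) (t : ℝ) :
    (ξ * Complex.exp (-t * I)).re = ξ.re * Real.cos t + ξ.im * Real.sin t := by
  rw [← ofReal_neg, Complex.mul_re, exp_ofReal_mul_I_re, exp_ofReal_mul_I_im, Real.cos_neg,
    Real.sin_neg]
  ring

theorem im_mul_exp_neg_ofReal_mul_I (ξ : ℂ) (t : ℝ) :
    (ξ * Complex.exp (-t * I)).im = ξ.im * Real.cos t - ξ.re * Real.sin t := by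
  rw [← ofReal_neg, Complex.mul_im, exp_ofReal_mul_I_re, exp_ofReal_mul_I_im, Real.cos_neg,
    Real.sin_neg]
  ring

theorem hasDerivAt_re_mul_exp_neg_ofReal_mul_I (ξ : ℂ) (t : ℝ) :
    HasDerivAt (fun t : ℝ => (ξ * Complex.exp (-t * I)).re) (ξ * Complex.exp (-t * I)).im t := by
  simp_rw [re_mul_exp_neg_ofReal_mul_I, im_mul_exp_neg_ofReal_mul_I]
  exact (((Real.hasDerivAt_cos t).const_mul _).add
    ((Real.hasDerivAt_sin t).const_mul _)).congr_deriv (by ring)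

theorem re_mul_conj_polarCoord_symm (ξ : ℂ) (p : ℝ × ℝ) :
    (ξ * starRingEnd ℂ (Complex.polarCoord.symm p)).re
      = (ξ * Complex.exp (-p.2 * I)).re * p.1 := by
  rw [re_mul_exp_neg_ofReal_mul_I, Complex.mul_re, conj_re, conj_im,
    Complex.polarCoord_symm_apply]
  simp only [re_ofReal_mul, im_ofReal_mul, add_re, add_im, ofReal_re, ofReal_im, mul_I_re,
    mul_I_im]
  ring

section

variable {α : ℝ}

theorem integrableOn_one_sub_cos_div_rpow (hα0 : 0 < α) (hα2 : α < 2) :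
    IntegrableOn (fun s : ℝ => (1 - Real.cos s) / s ^ (1 + α)) (Ioi 0) := by
  have hmeas : AEStronglyMeasurable (fun s : ℝ => (1 - Real.cos s) / s ^ (1 + α)) :=
    Measurable.aestronglyMeasurable (by fun_prop)
  have hnear : IntegrableOn (fun s : ℝ => (1 - Real.cos s) / s ^ (1 + α)) (Ioc 0 1) := by
    refine Integrable.mono' (g := fun s => s ^ (1 - α)) ?_ hmeas.restrict ?_
    · exact (intervalIntegrable_iff_integrableOn_Ioc_of_le zero_le_one).1
        (intervalIntegral.intervalIntegrable_rpow' (by linarith))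
    filter_upwards [ae_restrict_mem measurableSet_Ioc] with s hs
    rw [norm_of_nonneg (one_sub_cos_div_rpow_nonneg s hs.1.le _),
      div_le_iff₀ (rpow_pos_of_pos hs.1 _), ← rpow_add hs.1, sub_add_add_cancel,
      one_add_one_eq_two, rpow_two]
    nlinarith [one_sub_sq_div_two_le_cos (x := s)]
  have hfar : IntegrableOn (fun s : ℝ => (1 - Real.cos s) / s ^ (1 + α)) (Ioi 1) := by
    refine Integrable.mono' (g := fun s => 2 * s ^ (-(1 + α))) ?_ hmeas.restrict ?_
    · exact (integrableOn_Ioi_rpow_of_lt (by linarith) one_pos).const_mul 2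
    filter_upwards [ae_restrict_mem measurableSet_Ioi] with s hs
    have hs0 : 0 < s := one_pos.trans hs
    rw [norm_of_nonneg (one_sub_cos_div_rpow_nonneg s hs0.le _), rpow_neg hs0.le,
      ← div_eq_mul_inv]
    gcongr
    linarith [Real.neg_one_le_cos s]
  rw [← Ioc_union_Ioi_eq_Ioi zero_le_one]
  exact hnear.union hfar

theorem integral_one_sub_cos_div_rpow_pos (hα0 : 0 < α) (hα2 : α < 2) :
    0 < ∫ s in Ioi 0, (1 - Real.cos s) / s ^ (1 + α) := by
  refine setIntegral_pos_of_pos_on_isOpen measurableSet_Ioi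
    (integrableOn_one_sub_cos_div_rpow hα0 hα2)
    (fun s hs => one_sub_cos_div_rpow_nonneg s hs.le _)
    isOpen_Ioo (nonempty_Ioo.2 two_pi_pos) Ioo_subset_Ioi_self fun s ⟨hs0, hs⟩ => ?_
  have hcos : Real.cos s ≠ 1 := fun h =>
    hs0.ne' ((cos_eq_one_iff_of_lt_of_lt (by linarith [pi_pos]) hs).1 h)
  exact div_pos (sub_pos.2 ((Real.cos_le_one s).lt_of_ne hcos)) (rpow_pos_of_pos hs0 _)

theorem one_sub_cos_mul_div_rpow_eq {c r : ℝ} (hc : c ≠ 0) (hr : 0 < r) :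
    (1 - Real.cos (c * r)) / r ^ (1 + α)
      = |c| ^ (1 + α) * ((1 - Real.cos (|c| * r)) / (|c| * r) ^ (1 + α)) := by
  have hc' : 0 < |c| := abs_pos.2 hc
  rw [← Real.cos_abs (c * r), abs_mul, abs_of_pos hr, mul_rpow hc'.le hr.le]
  field_simp [(rpow_pos_of_pos hc' (1 + α)).ne']

theorem integral_one_sub_cos_mul_div_rpow (hα : α ≠ 0) (c : ℝ) :
    ∫ r in Ioi 0, (1 - Real.cos (c * r)) / r ^ (1 + α)
      = (∫ s in Ioi 0, (1 - Real.cos s) / s ^ (1 + α)) * |c| ^ α := by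
  rcases eq_or_ne c 0 with rfl | hc
  · simp [zero_rpow hα]
  have hc' : 0 < |c| := abs_pos.2 hc
  rw [setIntegral_congr_fun measurableSet_Ioi fun r hr => one_sub_cos_mul_div_rpow_eq hc hr,
    MeasureTheory.integral_const_mul,
    integral_comp_mul_left_Ioi (fun s => (1 - Real.cos s) / s ^ (1 + α)) 0 hc', mul_zero,
    smul_eq_mul, rpow_add hc', rpow_one]
  field_simp

theorem integrableOn_one_sub_cos_mul_div_rpow (hα0 : 0 < α) (hα2 : α < 2) (c : ℝ) :
    IntegrableOn (fun r : ℝ => (1 - Real.cos (c * r)) / r ^ (1 + α)) (Ioi 0) := by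
  rcases eq_or_ne c 0 with rfl | hc
  · simp
  have hscaled := ((integrableOn_Ioi_comp_mul_left_iff
    (fun s => (1 - Real.cos s) / s ^ (1 + α)) 0 (abs_pos.2 hc)).2
    (by simpa using integrableOn_one_sub_cos_div_rpow hα0 hα2)).const_mul (|c| ^ (1 + α))
  exact IntegrableOn.congr_fun hscaled (fun r hr => (one_sub_cos_mul_div_rpow_eq hc hr).symm)
    measurableSet_Ioi

theorem integrable_one_sub_cos_mul_div_rpow_prod (hα0 : 0 < α) (hα2 : α < 2) {u : ℝ → ℝ}
    (hu : Continuous u) (a b : ℝ) :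
    Integrable (fun p : ℝ × ℝ => (1 - Real.cos (u p.2 * p.1)) / p.1 ^ (1 + α))
      ((volume.restrict (Ioi 0)).prod (volume.restrict (Ioo a b))) := by
  refine (integrable_prod_iff' (Measurable.aestronglyMeasurable (by fun_prop))).2
    ⟨Eventually.of_forall fun θ => integrableOn_one_sub_cos_mul_div_rpow hα0 hα2 (u θ), ?_⟩
  have hnorm : ∀ θ, ∫ r in Ioi 0, ‖(1 - Real.cos (u θ * r)) / r ^ (1 + α)‖
      = (∫ s in Ioi 0, (1 - Real.cos s) / s ^ (1 + α)) * |u θ| ^ α := fun θ => by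
    rw [← integral_one_sub_cos_mul_div_rpow hα0.ne']
    exact setIntegral_congr_fun measurableSet_Ioi fun r hr =>
      norm_of_nonneg (one_sub_cos_div_rpow_nonneg _ hr.le _)
  simp_rw [hnorm]
  exact (Continuous.integrableOn_Icc (by fun_prop (disch := exact hα0.le))).mono_set
    Ioo_subset_Icc_self

theorem integral_one_sub_cos_re_mul_conj_mul_norm_rpow (hα0 : 0 < α) (hα2 : α < 2) (ξ : ℂ) :
    (∫ z : ℂ, (1 - Real.cos ((ξ * starRingEnd ℂ z).re)) * ‖z‖ ^ (-2 - α))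
      = (∫ s in Ioi 0, (1 - Real.cos s) / s ^ (1 + α))
          * ∫ t in 0..2 * π, |(ξ * Complex.exp (-t * I)).re| ^ α := by
  set cα := ∫ s in Ioi 0, (1 - Real.cos s) / s ^ (1 + α)
  set u : ℝ → ℝ := fun t => (ξ * Complex.exp (-t * I)).re
  have hu : Continuous u := by fun_prop
  set G : ℝ × ℝ → ℝ := fun p => (1 - Real.cos (u p.2 * p.1)) / p.1 ^ (1 + α)
  have hpolar : (∫ z : ℂ, (1 - Real.cos ((ξ * starRingEnd ℂ z).re)) * ‖z‖ ^ (-2 - α))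
      = ∫ p in Ioi 0 ×ˢ Ioo (-π) π, G p := by
    rw [← Complex.integral_comp_polarCoord_symm]
    refine setIntegral_congr_fun (measurableSet_Ioi.prod measurableSet_Ioo) fun p hp => ?_
    simp only [G, u]
    rw [smul_eq_mul, re_mul_conj_polarCoord_symm, norm_polarCoord_symm, abs_of_pos hp.1,
      div_eq_mul_inv, ← rpow_neg hp.1.le, show -(1 + α) = 1 + (-2 - α) by ring, rpow_add hp.1,
      rpow_one]
    ring
  have hradial : ∀ θ, ∫ r in Ioi 0, G (r, θ) = cα * |u θ| ^ α := fun θ =>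
    integral_one_sub_cos_mul_div_rpow hα0.ne' (u θ)
  rw [hpolar, Measure.volume_eq_prod, ← Measure.prod_restrict, integral_prod_symm G
    (integrable_one_sub_cos_mul_div_rpow_prod hα0 hα2 hu _ _)]
  simp_rw [hradial]
  have hper : Function.Periodic (fun t => |u t| ^ α) (2 * π) :=
    exp_neg_ofReal_mul_I_periodic.comp fun w => |(ξ * w).re| ^ α
  rw [MeasureTheory.integral_const_mul, hper.setIntegral_Ioo_neg_pi_pi]

theorem integral_abs_re_mul_exp_rpow_pos (hα : 0 ≤ α) {ξ : ℂ} (hξ : ξ ≠ 0) :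
    0 < ∫ t in 0..2 * π, |(ξ * Complex.exp (-t * I)).re| ^ α := by
  set u : ℝ → ℝ := fun t => (ξ * Complex.exp (-t * I)).re
  have hu : Continuous u := by fun_prop
  have hne : ∃ t ∈ Ioo 0 (2 * π), u t ≠ 0 := by
    rcases eq_or_ne ξ.im 0 with him | him
    · refine ⟨π, ⟨pi_pos, by linarith [pi_pos]⟩, ?_⟩
      have hre : ξ.re ≠ 0 := fun hre => hξ (Complex.ext hre him)
      simpa [u, re_mul_exp_neg_ofReal_mul_I, Real.cos_pi, Real.sin_pi] using hre
    · refine ⟨π / 2, ⟨by positivity, by linarith [pi_pos]⟩, ?_⟩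
      simp only [u, re_mul_exp_neg_ofReal_mul_I, Real.cos_pi_div_two, Real.sin_pi_div_two]
      simpa using him
  obtain ⟨t₀, ht₀, hut₀⟩ := hne
  rw [integral_of_le two_pi_pos.le]
  exact setIntegral_pos_of_pos_on_isOpen measurableSet_Ioc
    (hu.abs.rpow_const fun _ => Or.inr hα).integrableOn_Ioc (fun t _ => by positivity)
    (isOpen_Ioo.inter (isOpen_ne_fun hu continuous_const)) ⟨t₀, ht₀, hut₀⟩
    (inter_subset_left.trans Ioo_subset_Ioc_self)
    fun t ht => rpow_pos_of_pos (abs_pos.2 ht.2) α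

theorem conj_eq_conj_mul_exp_mul_exp (ξ : ℂ) (t : ℝ) :
    starRingEnd ℂ ξ = starRingEnd ℂ (ξ * Complex.exp (-t * I)) * Complex.exp (-t * I) := by
  rw [map_mul, mul_assoc, ← Complex.exp_conj, ← Complex.exp_add]
  simp

theorem hasDerivAt_abs_re_rpow_mul_re_mul_exp (hα : 0 < α) (ξ : ℂ) (t : ℝ) :
    HasDerivAt (fun t : ℝ => ((|(ξ * Complex.exp (-t * I)).re| ^ α
        * (ξ * Complex.exp (-t * I)).re : ℝ) : ℂ) * Complex.exp (-t * I))
      (I / 2 * (α * starRingEnd ℂ ξ * ((|(ξ * Complex.exp (-t * I)).re| ^ α : ℝ) : ℂ)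
        - (α + 2) * ξ * (((|(ξ * Complex.exp (-t * I)).re| ^ α : ℝ) : ℂ)
          * Complex.exp (-2 * t * I)))) t := by
  set E : ℂ := Complex.exp (-t * I)
  have hE : HasDerivAt (fun t : ℝ => Complex.exp (-t * I)) (E * -I) t :=
    (((hasDerivAt_id t).ofReal_comp.neg).mul_const I).cexp.congr_deriv (by simp [E])
  refine (((hasDerivAt_abs_rpow_mul_self hα _).comp t
    (hasDerivAt_re_mul_exp_neg_ofReal_mul_I ξ t)).ofReal_comp.mul hE).congr_deriv ?_
  set u := (ξ * E).re
  set v := (ξ * E).im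
  have hw : ξ * E = u + v * I := (re_add_im _).symm
  have hw' : starRingEnd ℂ (ξ * E) = u - v * I := by
    rw [hw]; simp [sub_eq_add_neg]
  have hconj : starRingEnd ℂ ξ = starRingEnd ℂ (ξ * E) * E :=
    conj_eq_conj_mul_exp_mul_exp ξ t
  have hE2 : Complex.exp (-2 * t * I) = E * E := by
    rw [← Complex.exp_add]; ring_nf
  simp only [Function.comp_apply]
  push_cast
  set A : ℂ := ((|u| ^ α : ℝ) : ℂ)
  linear_combination (I / 2 * (α + 2) * A * E) * hw - (I / 2 * α * A) * hconj
    - (I / 2 * α * A * E) * hw' + (I / 2 * (α + 2) * ξ * A) * hE2 + (A * E * (α + 1) * v) * I_sq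

theorem add_two_mul_integral_abs_re_rpow_mul_exp (hα : 0 < α) (ξ : ℂ) :
    ((α + 2 : ℝ) : ℂ) * ξ * ∫ t in 0..2 * π,
        ((|(ξ * Complex.exp (-t * I)).re| ^ α : ℝ) : ℂ) * Complex.exp (-2 * t * I)
      = α * starRingEnd ℂ ξ
          * ((∫ t in 0..2 * π, |(ξ * Complex.exp (-t * I)).re| ^ α : ℝ) : ℂ) := by
  set A : ℝ → ℂ := fun t => ((|(ξ * Complex.exp (-t * I)).re| ^ α : ℝ) : ℂ)
  have hA : Continuous A := by fun_prop (disch := exact hα.le)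
  have hAe : Continuous fun t : ℝ => A t * Complex.exp (-2 * t * I) := by fun_prop
  have hper : Function.Periodic (fun t : ℝ => ((|(ξ * Complex.exp (-t * I)).re| ^ α
      * (ξ * Complex.exp (-t * I)).re : ℝ) : ℂ) * Complex.exp (-t * I)) (2 * π) :=
    exp_neg_ofReal_mul_I_periodic.comp fun w => ((|(ξ * w).re| ^ α * (ξ * w).re : ℝ) : ℂ) * w
  have hftc := integral_eq_sub_of_hasDerivAt
    (fun t _ => hasDerivAt_abs_re_rpow_mul_re_mul_exp hα ξ t)
    (Continuous.intervalIntegrable (by fun_prop (disch := exact hα.le)) 0 (2 * π))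
  rw [hper.eq, sub_self, intervalIntegral.integral_const_mul,
    integral_sub ((hA.intervalIntegrable _ _).const_mul _)
      ((hAe.intervalIntegrable _ _).const_mul _),
    intervalIntegral.integral_const_mul, intervalIntegral.integral_const_mul] at hftc
  rw [← intervalIntegral.integral_ofReal]
  push_cast
  linear_combination -(mul_eq_zero.1 hftc).resolve_left (by simp)

theorem integral_abs_re_rpow_mul_exp_div_integral (hα : 0 < α) {ξ : ℂ} (hξ : ξ ≠ 0) :
    (∫ t in 0..2 * π, ((|(ξ * Complex.exp (-t * I)).re| ^ α : ℝ) : ℂ) * Complex.exp (-2 * t * I))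
        / ((∫ t in 0..2 * π, |(ξ * Complex.exp (-t * I)).re| ^ α : ℝ) : ℂ)
      = ((α / (α + 2) : ℝ) : ℂ) * starRingEnd ℂ ξ ^ 2 / ((‖ξ‖ : ℝ) : ℂ) ^ 2 := by
  have hD := ofReal_ne_zero.2 (integral_abs_re_mul_exp_rpow_pos hα.le hξ).ne'
  have hα2 : (α : ℂ) + 2 ≠ 0 := by exact_mod_cast (by linarith : α + 2 ≠ 0)
  have key := add_two_mul_integral_abs_re_rpow_mul_exp hα ξ
  generalize (∫ t in 0..2 * π, ((|(ξ * Complex.exp (-t * I)).re| ^ α : ℝ) : ℂ)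
    * Complex.exp (-2 * t * I)) = N at key ⊢
  generalize ((∫ t in 0..2 * π, |(ξ * Complex.exp (-t * I)).re| ^ α : ℝ) : ℂ) = D at key hD ⊢
  rw [← Complex.mul_conj']
  push_cast at key ⊢
  field_simp
  linear_combination key

end

theorem stable_levy_multiplier (α : ℝ) (hα0 : 0 < α) (hα2 : α < 2) (ξ : ℂ) (hξ : ξ ≠ 0) :
    let cα : ℝ := ∫ s in Set.Ioi (0 : ℝ), (1 - Real.cos s) / s ^ (1 + α)
    0 < cα ∧
    (∫ z : ℂ, (1 - Real.cos ((ξ * (starRingEnd ℂ) z).re)) * ‖z‖ ^ (-2 - α))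
      = cα * ∫ t in (0 : ℝ)..(2 * π), |(ξ * Complex.exp (-t * Complex.I)).re| ^ α ∧
    (∫ t in (0 : ℝ)..(2 * π),
        ((|(ξ * Complex.exp (-t * Complex.I)).re| ^ α : ℝ) : ℂ)
          * Complex.exp (-2 * t * Complex.I)) /
        ((∫ t in (0 : ℝ)..(2 * π), |(ξ * Complex.exp (-t * Complex.I)).re| ^ α : ℝ) : ℂ)
      = ((α / (α + 2) : ℝ) : ℂ) * ((starRingEnd ℂ) ξ) ^ 2 / ((‖ξ‖ : ℝ) : ℂ) ^ 2 := by
  intro cα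
  exact ⟨integral_one_sub_cos_div_rpow_pos hα0 hα2,
    integral_one_sub_cos_re_mul_conj_mul_norm_rpow hα0 hα2 ξ,
    integral_abs_re_rpow_mul_exp_div_integral hα0 hξ⟩
end

section
/- Let Ψ : M^{2×2}(ℝ) → ℝ be defined by Ψ(A) = -U(z, w) where, for A = [[a,b],[c,d]], z = (a+d) + i(c-b) and w = (a-d) + i(c+b), and U : ℂ × ℂ → ℝ satisfies: for all z, w, h, k ∈ ℂ with |k| ≤ |h|, the map t ↦ U(z + th, w + tk) is concave on ℝ. Then Ψ is rank-one convex: for every A ∈ M^{2×2}(ℝ) and all h', k' ∈ ℝ², the map t ↦ Ψ(A + t h'⊗k') is convex on ℝ. -/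
/-!
Identify `ℝ²` with `ℂ`. A real `2 × 2` matrix `M` then acts as `ζ ↦ (z ζ + w conj ζ) / 2` with
`z = M.conformalPart` and `w = M.anticonformalPart`, and `|z|² - |w|² = 4 det M`. Hence along a
rank-one direction `B` we have `|w_B| = |z_B|`, and `t ↦ Ψ(A + t B)` is `-U` restricted to the
complex line through `(z_A, w_A)` with direction `(z_B, w_B)`, which is convex by biconcavity.
-/

open Complex

namespace Matrix

def conformalPart (M : Matrix (Fin 2) (Fin 2) ℝ) : ℂ :=
  ((M 0 0 + M 1 1 : ℝ) : ℂ) + ((M 1 0 - M 0 1 : ℝ) : ℂ) * I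

def anticonformalPart (M : Matrix (Fin 2) (Fin 2) ℝ) : ℂ :=
  ((M 0 0 - M 1 1 : ℝ) : ℂ) + ((M 1 0 + M 0 1 : ℝ) : ℂ) * I

theorem conformalPart_add_smul (A B : Matrix (Fin 2) (Fin 2) ℝ) (t : ℝ) :
    (A + t • B).conformalPart = A.conformalPart + t * B.conformalPart := by
  apply Complex.ext <;>
    simp only [conformalPart, add_apply, smul_apply, smul_eq_mul, add_re, add_im, mul_re, mul_im,
      ofReal_re, ofReal_im, I_re, I_im] <;>
    ring

theorem anticonformalPart_add_smul (A B : Matrix (Fin 2) (Fin 2) ℝ) (t : ℝ) :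
    (A + t • B).anticonformalPart = A.anticonformalPart + t * B.anticonformalPart := by
  apply Complex.ext <;>
    simp only [anticonformalPart, add_apply, smul_apply, smul_eq_mul, add_re, add_im, mul_re, mul_im,
      ofReal_re, ofReal_im, I_re, I_im] <;>
    ring

theorem normSq_conformalPart_sub_normSq_anticonformalPart (M : Matrix (Fin 2) (Fin 2) ℝ) :
    normSq M.conformalPart - normSq M.anticonformalPart = 4 * M.det := by
  simp only [conformalPart, anticonformalPart, normSq_apply, det_fin_two, add_re, add_im, mul_re,
    mul_im, ofReal_re, ofReal_im, I_re, I_im]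
  ring

theorem norm_anticonformalPart_eq_of_det_eq_zero {M : Matrix (Fin 2) (Fin 2) ℝ} (hM : M.det = 0) :
    ‖M.anticonformalPart‖ = ‖M.conformalPart‖ := by
  have h := normSq_conformalPart_sub_normSq_anticonformalPart M
  rw [hM, normSq_eq_norm_sq, normSq_eq_norm_sq] at h
  exact (pow_left_inj₀ (norm_nonneg _) (norm_nonneg _) two_ne_zero).mp (by linarith)

end Matrix

open Matrix in
theorem convexOn_neg_comp_add_smul_of_det_eq_zero (U : ℂ → ℂ → ℝ)
    (hU : ∀ z w h k : ℂ, ‖k‖ ≤ ‖h‖ →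
      ConcaveOn ℝ Set.univ (fun t : ℝ => U (z + t * h) (w + t * k)))
    (A : Matrix (Fin 2) (Fin 2) ℝ) {B : Matrix (Fin 2) (Fin 2) ℝ} (hB : B.det = 0) :
    ConvexOn ℝ Set.univ
      (fun t : ℝ => -U (A + t • B).conformalPart (A + t • B).anticonformalPart) := by
  simp_rw [conformalPart_add_smul, anticonformalPart_add_smul]
  exact neg_convexOn_iff.mpr <| hU _ _ _ _ (norm_anticonformalPart_eq_of_det_eq_zero hB).le

open Real Complex

/-- Burkholder's biconcavity implies rank-one convexity of the associated function `Ψ`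
on 2×2 real matrices. -/
theorem rank_one_convex_of_biconcave (U : ℂ → ℂ → ℝ)
    (hU : ∀ z w h k : ℂ, ‖k‖ ≤ ‖h‖ →
      ConcaveOn ℝ Set.univ (fun t : ℝ => U (z + t * h) (w + t * k))) :
    ∀ (A : Matrix (Fin 2) (Fin 2) ℝ) (h' k' : Fin 2 → ℝ),
      ConvexOn ℝ Set.univ (fun t : ℝ =>
        (fun M : Matrix (Fin 2) (Fin 2) ℝ =>
          -U (((M 0 0 + M 1 1 : ℝ) : ℂ) + ((M 1 0 - M 0 1 : ℝ) : ℂ) * Complex.I)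
             (((M 0 0 - M 1 1 : ℝ) : ℂ) + ((M 1 0 + M 0 1 : ℝ) : ℂ) * Complex.I))
          (A + t • Matrix.vecMulVec h' k')) := fun A h' k' =>
  convexOn_neg_comp_add_smul_of_det_eq_zero U hU A (Matrix.det_vecMulVec h' k')
end
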